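/- The closed linearity of the disjoint union of a finite collection of graphs equals the maximum of the closed linearities of the graphs in the collection (for a nonempty collection of nonempty graphs). -/

import Mathlib

def IsIntervalOf {V : Type*} {n : ℕ} (σ : V ≃ Fin n) (I : Set V) : Prop :=
  ∃ a b : Fin n, I = {v | a ≤ σ v ∧ σ v ≤ b}

def closedNbhd {V : Type*} (G : SimpleGraph V) (x : V) : Set V := {y | G.Adj x y ∨ y = x}

def HasClosedLineModel {V : Type*} [Fintype V] (G : SimpleGraph V) (p : ℕ) : Prop :=
  ∃ σ : Fin p → (V ≃ Fin (Fintype.card V)),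
    ∀ x : V, ∃ I : Fin p → Set V,
      (∀ i, IsIntervalOf (σ i) (I i)) ∧ (⋃ i, I i) = closedNbhd G x

def HasOpenLineModel {V : Type*} [Fintype V] (G : SimpleGraph V) (p : ℕ) : Prop :=
  ∃ σ : Fin p → (V ≃ Fin (Fintype.card V)),
    ∀ x : V, ∃ I : Fin p → Set V,
      (∀ i, IsIntervalOf (σ i) (I i)) ∧ (⋃ i, I i) = G.neighborSet x

noncomputable def linCl {V : Type*} [Fintype V] (G : SimpleGraph V) : ℕ :=
  sInf {p | HasClosedLineModel G p}

noncomputable def linOp {V : Type*} [Fintype V] (G : SimpleGraph V) : ℕ :=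
  sInf {p | HasOpenLineModel G p}

def HasContigModel {V : Type*} [Fintype V] (G : SimpleGraph V) (k : ℕ) : Prop :=
  ∃ σ : V ≃ Fin (Fintype.card V),
    ∀ x : V, ∃ I : Fin k → Set V,
      (∀ i, IsIntervalOf σ (I i)) ∧ (⋃ i, I i) = closedNbhd G x

noncomputable def contCl {V : Type*} [Fintype V] (G : SimpleGraph V) : ℕ :=
  sInf {k | HasContigModel G k}

def sigmaGraph {ι : Type*} {V : ι → Type*} (G : ∀ i, SimpleGraph (V i)) :
    SimpleGraph (Σ i, V i) where
  Adj x y := ∃ (i : ι) (a b : V i), x = ⟨i, a⟩ ∧ y = ⟨i, b⟩ ∧ (G i).Adj a b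
  symm := by constructor; rintro x y ⟨i, a, b, rfl, rfl, h⟩; exact ⟨i, b, a, rfl, rfl, h.symm⟩
  loopless := by
    constructor
    rintro x ⟨i, a, b, rfl, h2, h⟩
    simp only [Sigma.mk.inj_iff, heq_eq_eq, true_and] at h2
    subst h2
    exact (G i).irrefl h

/- A closed line model only depends on the relative orders it uses: any injections into a linear
order will do, with ord-connected sets in place of intervals. Restricting a model of the disjoint
union to one component therefore gives a model of that component, and concatenating models of the
components (lexicographic order on the sigma type) gives a model of the union, so
`lin(⊔ Gᵢ) ≤ p ↔ ∀ i, lin(Gᵢ) ≤ p`. This needs models to persist from `p` to every `q ≥ p`,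
which holds by repeating orders. -/

open Function Set

section LineModel

variable {V : Type*}

lemma mem_closedNbhd_self (G : SimpleGraph V) (x : V) : x ∈ closedNbhd G x := Or.inr rfl

lemma exists_equiv_fin_le_iff_of_injective [Fintype V] {β : Type*} [LinearOrder β]
    {f : V → β} (hf : Injective f) :
    ∃ τ : V ≃ Fin (Fintype.card V), ∀ u v, τ u ≤ τ v ↔ f u ≤ f v := by
  classical
  let e := Fintype.orderIsoFinOfCardEq (range f) (card_range_of_injective hf)
  exact ⟨(Equiv.ofInjective f hf).trans e.symm.toEquiv, fun u v => e.symm.le_iff_le⟩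

lemma IsIntervalOf.exists_ordConnected {n : ℕ} {σ : V ≃ Fin n} {I : Set V}
    (h : IsIntervalOf σ I) : ∃ S : Set (Fin n), S.OrdConnected ∧ I = σ ⁻¹' S := by
  obtain ⟨a, b, rfl⟩ := h
  exact ⟨Icc a b, ordConnected_Icc, rfl⟩

lemma isIntervalOf_preimage [Finite V] {n : ℕ} {β : Type*} [LinearOrder β] {f : V → β}
    (τ : V ≃ Fin n) (hτ : ∀ u v, τ u ≤ τ v ↔ f u ≤ f v) {S : Set β} (hS : S.OrdConnected)
    (hne : (f ⁻¹' S).Nonempty) : IsIntervalOf τ (f ⁻¹' S) := by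
  obtain ⟨a, ha, hmin⟩ := exists_min_image _ f (toFinite _) hne
  obtain ⟨b, hb, hmax⟩ := exists_max_image _ f (toFinite _) hne
  refine ⟨τ a, τ b, ext fun v => ?_⟩
  simp only [mem_ofPred_eq, hτ]
  exact ⟨fun hv => ⟨hmin v hv, hmax v hv⟩, fun hv => hS.out ha hb hv⟩

theorem hasClosedLineModel_of_preimages [Fintype V] {β : Type*} [LinearOrder β]
    (G : SimpleGraph V) {p : ℕ} (f : Fin p → V → β) (hf : ∀ j, Injective (f j))
    (h : ∀ x, ∃ S : Fin p → Set β, (∀ j, (S j).OrdConnected) ∧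
      ⋃ j, f j ⁻¹' S j = closedNbhd G x) :
    HasClosedLineModel G p := by
  classical
  choose τ hτ using fun j => exists_equiv_fin_le_iff_of_injective (hf j)
  refine ⟨τ, fun x => ?_⟩
  obtain ⟨S, hS, hU⟩ := h x
  -- Empty preimages are replaced by `{x}`: when `V` is a single vertex, `∅` is not an interval.
  have hT : ∀ j, ∃ T : Set β, T.OrdConnected ∧ (f j ⁻¹' T).Nonempty ∧
      f j ⁻¹' S j ⊆ f j ⁻¹' T ∧ f j ⁻¹' T ⊆ insert x (f j ⁻¹' S j) := by
    intro j
    by_cases hj : (f j ⁻¹' S j).Nonempty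
    · exact ⟨S j, hS j, hj, subset_rfl, subset_insert _ _⟩
    · refine ⟨{f j x}, ordConnected_singleton, ⟨x, rfl⟩, ?_, fun v hv => .inl (hf j hv)⟩
      simp only [not_nonempty_iff_eq_empty.mp hj, empty_subset]
  choose T hT hne hST hTS using hT
  refine ⟨fun j => f j ⁻¹' T j, fun j => isIntervalOf_preimage _ (hτ j) (hT j) (hne j), ?_⟩
  refine subset_antisymm ?_ (hU ▸ iUnion_mono hST)
  calc ⋃ j, f j ⁻¹' T j ⊆ insert x (⋃ j, f j ⁻¹' S j) :=
        iUnion_subset fun j =>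
          (hTS j).trans (insert_subset_insert (subset_iUnion (fun j => f j ⁻¹' S j) j))
    _ = closedNbhd G x := by rw [hU, insert_eq_of_mem (mem_closedNbhd_self G x)]

theorem hasClosedLineModel_card [Fintype V] (G : SimpleGraph V) :
    HasClosedLineModel G (Fintype.card V) := by
  classical
  let e := Fintype.equivFin V
  refine hasClosedLineModel_of_preimages G (fun _ => e) (fun _ => e.injective) fun x => ?_
  let g : Fin (Fintype.card V) → V := fun j => if e.symm j ∈ closedNbhd G x then e.symm j else x
  refine ⟨fun j => {e (g j)}, fun _ => ordConnected_singleton, ?_⟩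
  have hg : ∀ j, e ⁻¹' {e (g j)} = {g j} := fun j => ext fun _ => e.apply_eq_iff_eq
  simp only [hg, iUnion_singleton_eq_range]
  refine subset_antisymm (range_subset_iff.mpr fun j => ?_) fun y hy => ⟨e y, by simp [g, hy]⟩
  by_cases hj : e.symm j ∈ closedNbhd G x
  · simpa only [g, if_pos hj]
  · simpa only [g, if_neg hj] using mem_closedNbhd_self G x

lemma HasClosedLineModel.pos [Fintype V] [Nonempty V] {G : SimpleGraph V} {p : ℕ}
    (h : HasClosedLineModel G p) : 0 < p := by
  obtain ⟨σ, hσ⟩ := h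
  obtain ⟨x⟩ := ‹Nonempty V›
  obtain ⟨I, -, hU⟩ := hσ x
  have hx : x ∈ ⋃ j, I j := hU ▸ mem_closedNbhd_self G x
  obtain ⟨j, -⟩ := mem_iUnion.mp hx
  exact j.pos

lemma HasClosedLineModel.comp_surjective [Fintype V] {G : SimpleGraph V} {p q : ℕ}
    (h : HasClosedLineModel G p) {r : Fin q → Fin p} (hr : Surjective r) :
    HasClosedLineModel G q := by
  obtain ⟨σ, hσ⟩ := h
  refine ⟨σ ∘ r, fun x => ?_⟩
  obtain ⟨I, hI, hU⟩ := hσ x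
  exact ⟨I ∘ r, fun j => hI (r j), (hr.iUnion_comp I).trans hU⟩

theorem HasClosedLineModel.mono [Fintype V] {G : SimpleGraph V} {p q : ℕ}
    (h : HasClosedLineModel G p) (hpq : p ≤ q) : HasClosedLineModel G q := by
  cases isEmpty_or_nonempty V
  · exact ⟨fun _ => Fintype.equivFin V, isEmptyElim⟩
  · have : Nonempty (Fin p) := ⟨⟨0, h.pos⟩⟩
    exact h.comp_surjective (invFun_surjective (Fin.castLE_injective hpq))

theorem linCl_le_iff [Fintype V] {G : SimpleGraph V} {p : ℕ} :
    linCl G ≤ p ↔ HasClosedLineModel G p :=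
  ⟨(Nat.sInf_mem (s := {p | HasClosedLineModel G p}) ⟨_, hasClosedLineModel_card G⟩).mono,
    fun h => Nat.sInf_le h⟩

end LineModel

theorem Sigma.Lex.preimage_toLex_Icc_mk {ι : Type*} {α : ι → Type*} [Preorder ι]
    [∀ i, Preorder (α i)] (i : ι) (a b : α i) :
    toLex ⁻¹' Icc (toLex (⟨i, a⟩ : Σ i, α i)) (toLex ⟨i, b⟩) = Sigma.mk i '' Icc a b := by
  ext ⟨k, c⟩
  constructor
  · rintro ⟨hac, hcb⟩
    change Sigma.Lex (· < ·) (fun _ => (· ≤ ·)) ⟨i, a⟩ ⟨k, c⟩ at hac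
    change Sigma.Lex (· < ·) (fun _ => (· ≤ ·)) ⟨k, c⟩ ⟨i, b⟩ at hcb
    cases hac with
    | left _ _ hik =>
      cases hcb with
      | left _ _ hki => exact absurd hik hki.not_gt
      | right => exact absurd hik (lt_irrefl _)
    | right _ c hac =>
      cases hcb with
      | left _ _ hii => exact absurd hii (lt_irrefl _)
      | right _ _ hcb => exact ⟨c, ⟨hac, hcb⟩, rfl⟩
  · rintro ⟨c, hc, h⟩
    obtain ⟨rfl, h⟩ := Sigma.mk.inj_iff.mp h
    subst h
    exact ⟨Sigma.Lex.right _ _ hc.1, Sigma.Lex.right _ _ hc.2⟩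

section SigmaGraph

variable {ι : Type*} {V : ι → Type*} (G : ∀ i, SimpleGraph (V i))

lemma closedNbhd_sigmaGraph_mk (i : ι) (x : V i) :
    closedNbhd (sigmaGraph G) ⟨i, x⟩ = Sigma.mk i '' closedNbhd (G i) x := by
  ext y
  constructor
  · rintro (⟨_, _, z, ⟨⟩, rfl, hz⟩ | rfl)
    · exact ⟨z, .inl hz, rfl⟩
    · exact ⟨x, mem_closedNbhd_self _ x, rfl⟩
  · rintro ⟨z, hz | rfl, rfl⟩
    · exact .inl ⟨i, x, z, rfl, rfl, hz⟩
    · exact mem_closedNbhd_self _ _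

variable [Fintype ι] [∀ i, Fintype (V i)] {p : ℕ}

theorem HasClosedLineModel.of_sigmaGraph (h : HasClosedLineModel (sigmaGraph G) p) (i : ι) :
    HasClosedLineModel (G i) p := by
  obtain ⟨σ, hσ⟩ := h
  refine hasClosedLineModel_of_preimages (G i) (fun j => σ j ∘ Sigma.mk i)
    (fun j => (σ j).injective.comp sigma_mk_injective) fun x => ?_
  obtain ⟨I, hI, hU⟩ := hσ ⟨i, x⟩
  choose S hS hIS using fun j => (hI j).exists_ordConnected
  refine ⟨S, hS, ?_⟩
  rw [← sigma_mk_injective.preimage_image (closedNbhd (G i) x), ← closedNbhd_sigmaGraph_mk, ← hU]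
  simp only [preimage_comp, ← preimage_iUnion, hIS]

theorem hasClosedLineModel_sigmaGraph (h : ∀ i, HasClosedLineModel (G i) p) :
    HasClosedLineModel (sigmaGraph G) p := by
  let : LinearOrder ι := LinearOrder.lift' _ (Fintype.equivFin ι).injective
  choose σ hσ using h
  let f j : (Σ i, V i) → Σ i, Fin (Fintype.card (V i)) := Sigma.map id fun i => σ i j
  have hf j : Injective (f j) := injective_id.sigma_map fun i => (σ i j).injective
  refine hasClosedLineModel_of_preimages _ (fun j => toLex ∘ f j)
    (fun j => toLex.injective.comp (hf j)) ?_
  rintro ⟨i, x⟩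
  obtain ⟨I, hI, hU⟩ := hσ i x
  choose a b hab using hI
  refine ⟨fun j => Icc (toLex ⟨i, a j⟩) (toLex ⟨i, b j⟩), fun _ => ordConnected_Icc, ?_⟩
  rw [closedNbhd_sigmaGraph_mk, ← hU, image_iUnion]
  refine iUnion_congr fun j => ?_
  rw [preimage_comp, Sigma.Lex.preimage_toLex_Icc_mk, hab j]
  exact (image_sigmaMk_preimage_sigmaMap injective_id _ i _).symm

theorem hasClosedLineModel_sigmaGraph_iff :
    HasClosedLineModel (sigmaGraph G) p ↔ ∀ i, HasClosedLineModel (G i) p :=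
  ⟨fun h => h.of_sigmaGraph G, hasClosedLineModel_sigmaGraph G⟩

end SigmaGraph

theorem linCl_sigmaGraph_general {ι : Type*} [Fintype ι] {V : ι → Type*}
    [∀ i, Fintype (V i)] (G : ∀ i, SimpleGraph (V i)) :
    linCl (sigmaGraph G) = Finset.univ.sup (fun i => linCl (G i)) :=
  eq_of_forall_ge_iff fun p => by
    simp only [linCl_le_iff, hasClosedLineModel_sigmaGraph_iff, Finset.sup_le_iff,
      Finset.mem_univ, true_implies]

theorem linCl_sigmaGraph {ι : Type*} [Fintype ι] [Nonempty ι] {V : ι → Type*}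
    [∀ i, Fintype (V i)] [∀ i, Nonempty (V i)] (G : ∀ i, SimpleGraph (V i)) :
    linCl (sigmaGraph G) = Finset.univ.sup (fun i => linCl (G i)) :=
  linCl_sigmaGraph_general G
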